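/- Let α, β > 0 and let u₁, u₂ be twice continuously differentiable nonnegative solutions on (0,∞) of u'' = (αβ/2) u + u(u²−1)/r² with lim_{r→0} u_i(r) = 1, lim_{r→∞} u_i(r) = 0, and finite energy I(u_i) = ∫₀^∞ [2 u_i'² + (1−u_i²)²/r² + αβ u_i²] dr < ∞ for i = 1,2. Then u₁ = u₂ on (0,∞). In particular, the energy I has a unique minimizer subject to these boundary conditions. -/

import Mathlib

/-!
A nonnegative solution `u` with these boundary values satisfies `0 < u ≤ 1`: the upper bound is
the maximum principle, and positivity and the bound `|u'| ≤ m u` near infinity, `m = √(αβ/2)`,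
come from the monotonicity of `(u' ∓ m u) e^{± m r}`, whose derivative is
`u (u² - 1) e^{± m r} / r² ≤ 0`.
For any admissible `w`, Picone's identity
`uIntegrand w - uIntegrand u = 2 (w' - (u'/u) w)² + (w² - u²)²/r² + (2 (u'/u) (w² - u²))'`
integrates to `I(w) - I(u) ≥ ∫ (w² - u²)²/r²`: the boundary term tends to `0` at infinity, and
along a sequence `r → 0` because finite energy forces `r · (uIntegrand u + uIntegrand w) → 0`
along one. So `u` minimizes `I`, and `I(w) ≤ I(u)` forces `w² = u²`, hence `w = u` since `u > 0`
and `w → 1` at `0`.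
-/

open MeasureTheory Filter Set Topology

noncomputable section

/-- `g` is absolutely continuous on every compact subinterval of `(0,∞)`,
with almost-everywhere derivative `g'`. -/
def LocAC (g g' : ℝ → ℝ) : Prop :=
  ∀ a b : ℝ, 0 < a → a ≤ b →
    IntervalIntegrable g' volume a b ∧ g b - g a = ∫ t in a..b, g' t

/-- The integrand of the `γ = ∞` reduced energy functional
`I(u) = ∫₀^∞ [2 u'² + (1−u²)²/r² + αβ u²] dr`. -/
def uIntegrand (α β : ℝ) (u u' : ℝ → ℝ) (r : ℝ) : ℝ :=
  2 * u' r ^ 2 + (1 - u r ^ 2) ^ 2 / r ^ 2 + α * β * u r ^ 2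

/-- The `γ = ∞` reduced energy `I(u)`. -/
def uEnergy (α β : ℝ) (u u' : ℝ → ℝ) : ℝ :=
  ∫ r in Ioi (0 : ℝ), uIntegrand α β u u' r

/-- The admissible class for the `γ = ∞` problem. -/
def uAdm (α β : ℝ) (u u' : ℝ → ℝ) : Prop :=
  LocAC u u' ∧ IntegrableOn (uIntegrand α β u u') (Ioi 0) ∧
    Tendsto u (𝓝[>] (0 : ℝ)) (𝓝 1) ∧ Tendsto u atTop (𝓝 0)

namespace LocAC

variable {g g' f f' : ℝ → ℝ}

theorem exists_absolutelyContinuousOnInterval (h : LocAC g g') {a b : ℝ} (ha : 0 < a)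
    (hab : a ≤ b) :
    ∃ G, AbsolutelyContinuousOnInterval G a b ∧ EqOn g G (uIcc a b) ∧
      ∀ᵐ x, x ∈ uIcc a b → deriv G x = g' x := by
  have hint := (h a b ha hab).1
  refine ⟨fun x => g a + ∫ t in a..x, g' t,
    (LipschitzWith.const (g a)).lipschitzOnWith.absolutelyContinuousOnInterval.fun_add
      (hint.absolutelyContinuousOnInterval_intervalIntegral left_mem_uIcc), fun x hx => ?_, ?_⟩
  · rw [uIcc_of_le hab] at hx
    exact eq_add_of_sub_eq' (h a x ha hx.1).2
  · filter_upwards [hint.ae_hasDerivAt_integral] with x hx hxab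
    exact ((hx hxab a left_mem_uIcc).const_add (g a)).deriv

theorem continuousOn (h : LocAC g g') : ContinuousOn g (Ioi 0) := by
  intro r (hr : 0 < r)
  obtain ⟨G, hG, hgG, -⟩ :=
    h.exists_absolutelyContinuousOnInterval (half_pos hr) (by linarith : r / 2 ≤ r + 1)
  have hnhds : uIcc (r / 2) (r + 1) ∈ 𝓝 r := by
    rw [uIcc_of_le (by linarith)]
    exact Icc_mem_nhds (by linarith) (by linarith)
  exact ((hG.continuousOn.congr hgG).continuousAt hnhds).continuousWithinAt

theorem of_hasDerivAt (hg : ∀ r, 0 < r → HasDerivAt g (g' r) r) (hg' : ContinuousOn g' (Ioi 0)) :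
    LocAC g g' := by
  intro a b ha hab
  have hsub : uIcc a b ⊆ Ioi 0 := by
    rw [uIcc_of_le hab]
    exact fun x hx => ha.trans_le hx.1
  have hint : IntervalIntegrable g' volume a b := (hg'.mono hsub).intervalIntegrable
  exact ⟨hint, (intervalIntegral.integral_eq_sub_of_hasDerivAt
    (fun x hx => hg x (hsub hx)) hint).symm⟩

theorem congr (h : LocAC g g') (hg : EqOn g f (Ioi 0)) (hg' : EqOn g' f' (Ioi 0)) :
    LocAC f f' := by
  intro a b ha hab
  have hsub : uIcc a b ⊆ Ioi 0 := by
    rw [uIcc_of_le hab]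
    exact fun x hx => ha.trans_le hx.1
  obtain ⟨hint, hFTC⟩ := h a b ha hab
  refine ⟨hint.congr (hg'.mono (uIoc_subset_uIcc.trans hsub)), ?_⟩
  rw [← hg (hsub right_mem_uIcc), ← hg (hsub left_mem_uIcc), hFTC]
  exact intervalIntegral.integral_congr (hg'.mono hsub)

theorem sub (hg : LocAC g g') (hf : LocAC f f') :
    LocAC (fun r => g r - f r) (fun r => g' r - f' r) := by
  intro a b ha hab
  obtain ⟨hgi, hge⟩ := hg a b ha hab
  obtain ⟨hfi, hfe⟩ := hf a b ha hab
  refine ⟨hgi.sub hfi, ?_⟩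
  rw [intervalIntegral.integral_sub hgi hfi]
  linarith

theorem mul (hg : LocAC g g') (hf : LocAC f f') :
    LocAC (fun r => g r * f r) (fun r => g' r * f r + g r * f' r) := by
  intro a b ha hab
  obtain ⟨G, hG, hgG, hG'⟩ := hg.exists_absolutelyContinuousOnInterval ha hab
  obtain ⟨F, hF, hfF, hF'⟩ := hf.exists_absolutelyContinuousOnInterval ha hab
  refine ⟨((hg a b ha hab).1.mul_continuousOn (hF.continuousOn.congr hfF)).add
    ((hf a b ha hab).1.continuousOn_mul (hG.continuousOn.congr hgG)), ?_⟩
  beta_reduce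
  rw [hgG right_mem_uIcc, hgG left_mem_uIcc, hfF right_mem_uIcc, hfF left_mem_uIcc,
    ← hG.integral_deriv_mul_eq_sub hF]
  refine intervalIntegral.integral_congr_ae ?_
  filter_upwards [hG', hF'] with x hGx hFx hx
  have hx' := uIoc_subset_uIcc hx
  rw [hGx hx', hFx hx', hgG hx', hfF hx']

end LocAC

theorem not_isLocalMax_of_hasDerivAt_deriv_pos {f f' : ℝ → ℝ} {x₀ D : ℝ}
    (hf : ∀ᶠ x in 𝓝 x₀, HasDerivAt f (f' x) x) (hf' : HasDerivAt f' D x₀) (hD : 0 < D) :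
    ¬IsLocalMax f x₀ := by
  intro hmax
  have hd : deriv f =ᶠ[𝓝 x₀] f' := hf.mono fun x hx => hx.deriv
  have hdd : deriv (deriv f) x₀ = D := hd.deriv_eq.trans hf'.deriv
  have hmin : IsLocalMin f x₀ := isLocalMin_of_deriv_deriv_pos (hdd ▸ hD)
    (hd.self_of_nhds.trans (hmax.hasDerivAt_eq_zero hf.self_of_nhds))
    hf.self_of_nhds.continuousAt
  have hconst : f =ᶠ[𝓝 x₀] fun _ => f x₀ :=
    (hmin.and hmax).mono fun x h => le_antisymm h.2 h.1
  have : deriv (deriv f) x₀ = 0 := by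
    rw [hconst.deriv.deriv_eq]
    simp
  linarith

theorem ContinuousOn.exists_isLocalMax_of_eventually_lt {f : ℝ → ℝ}
    (hf : ContinuousOn f (Ioi 0)) {r₁ : ℝ} (hr₁ : 0 < r₁)
    (h0 : ∀ᶠ r in 𝓝[>] 0, f r < f r₁) (hinf : ∀ᶠ r in atTop, f r < f r₁) :
    ∃ r₀, 0 < r₀ ∧ f r₁ ≤ f r₀ ∧ IsLocalMax f r₀ := by
  obtain ⟨a, hfa, ha⟩ := (h0.and (Ioo_mem_nhdsGT hr₁)).exists
  obtain ⟨b, hfb, hb⟩ := (hinf.and (eventually_gt_atTop r₁)).exists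
  obtain ⟨r₀, hr₀, hmax⟩ := isCompact_Icc.exists_isMaxOn (nonempty_Icc.2 (ha.2.le.trans hb.le))
    (hf.mono fun x hx => ha.1.trans_le hx.1)
  have h₁ : f r₁ ≤ f r₀ := hmax ⟨ha.2.le, hb.le⟩
  have ha₀ : a < r₀ := hr₀.1.lt_of_ne (by rintro rfl; linarith)
  have hb₀ : r₀ < b := hr₀.2.lt_of_ne (by rintro rfl; linarith)
  exact ⟨r₀, ha.1.trans ha₀, h₁, hmax.isLocalMax (Icc_mem_nhds ha₀ hb₀)⟩

theorem exists_seq_tendsto_mul_abs_tendsto_zero {f : ℝ → ℝ} {δ : ℝ} (hδ : 0 < δ)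
    (hf : IntegrableOn f (Ioo 0 δ)) :
    ∃ x : ℕ → ℝ, Tendsto x atTop (𝓝[>] 0) ∧ Tendsto (fun n => x n * |f (x n)|) atTop (𝓝 0) := by
  have key : ∀ n : ℕ, ∃ x ∈ Ioo 0 (min δ (1 / (n + 1))), x * |f x| < 1 / (n + 1) := by
    intro n
    by_contra! h
    set η := min δ (1 / ((n : ℝ) + 1))
    have hη : 0 < η := lt_min hδ (by positivity)
    -- otherwise `x⁻¹ ≤ (n + 1) |f x|` on `(0, η)`, where `x⁻¹` is not integrable
    have hinv : IntegrableOn (fun x : ℝ => x⁻¹) (Ioo 0 η) := by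
      refine ((hf.mono_set (Ioo_subset_Ioo_right (min_le_left _ _))).norm.const_mul
        ((n : ℝ) + 1)).mono' measurable_inv.aestronglyMeasurable
        (ae_restrict_of_forall_mem measurableSet_Ioo fun x hx => ?_)
      rw [norm_inv, Real.norm_of_nonneg hx.1.le, Real.norm_eq_abs]
      have := h x hx
      calc x⁻¹ = x⁻¹ * (((n : ℝ) + 1) * (1 / (n + 1))) := by field_simp
        _ ≤ x⁻¹ * (((n : ℝ) + 1) * (x * |f x|)) := by gcongr; exact inv_nonneg.2 hx.1.le
        _ = ((n : ℝ) + 1) * |f x| := by field_simp [hx.1.ne']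
    have := (intervalIntegrable_iff_integrableOn_Ioo_of_le hη.le).2 hinv
    simp [intervalIntegrable_inv_iff, hη.ne] at this
  choose x hx hfx using key
  refine ⟨x, tendsto_nhdsWithin_iff.2 ⟨squeeze_zero (fun n => (hx n).1.le)
      (fun n => (hx n).2.le.trans (min_le_right _ _)) tendsto_one_div_add_atTop_nhds_zero_nat,
      Eventually.of_forall fun n => (hx n).1⟩,
    squeeze_zero (fun n => mul_nonneg (hx n).1.le (abs_nonneg _)) (fun n => (hfx n).le)
      tendsto_one_div_add_atTop_nhds_zero_nat⟩

theorem tendsto_setIntegral_Ioc_of_integrableOn {ι : Type*} {l : Filter ι}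
    [l.IsCountablyGenerated] {f : ℝ → ℝ} {a b : ι → ℝ} (hf : IntegrableOn f (Ioi 0))
    (ha : Tendsto a l (𝓝[>] 0)) (hb : Tendsto b l atTop) :
    Tendsto (fun i => ∫ x in Ioc (a i) (b i), f x) l (𝓝 (∫ x in Ioi 0, f x)) := by
  have hcover : AECover (volume.restrict (Ioi 0)) l fun i => Ioi (a i) ∩ Iic (b i) :=
    (aecover_Ioi_of_Ioi (tendsto_nhdsWithin_iff.1 ha).1).inter (aecover_Iic hb)
  refine (hcover.integral_tendsto_of_countably_generated hf).congr' ?_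
  filter_upwards [(tendsto_nhdsWithin_iff.1 ha).2] with i (hi : 0 < a i)
  rw [Measure.restrict_restrict (measurableSet_Ioi.inter measurableSet_Iic), Ioi_inter_Iic,
    inter_eq_left.2 (Ioc_subset_Ioi_self.trans (Ioi_subset_Ioi hi.le))]

theorem eq_zero_of_forall_integral_Ioc_nonpos {f : ℝ → ℝ} (hf : ContinuousOn f (Ioi 0))
    (hf₀ : ∀ r, 0 < r → 0 ≤ f r) (h : ∀ c d, 0 < c → c ≤ d → ∫ r in Ioc c d, f r ≤ 0) :
    ∀ r, 0 < r → f r = 0 := by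
  intro r hr
  refine (hf₀ r hr).antisymm' (not_lt.1 fun hfr => ?_)
  obtain ⟨l, u, ⟨hl, hu⟩, hsub⟩ := mem_nhds_iff_exists_Ioo_subset.1
    (inter_mem (Ioi_mem_nhds hr) ((hf.continuousAt (Ioi_mem_nhds hr)).eventually (lt_mem_nhds hfr)))
  have hsub' : Icc ((l + r) / 2) ((r + u) / 2) ⊆ Ioi 0 ∩ {x | 0 < f x} :=
    fun x hx => hsub ⟨by linarith [hx.1], by linarith [hx.2]⟩
  have hlu : (l + r) / 2 ≤ (r + u) / 2 := by linarith
  have hpos := intervalIntegral.intervalIntegral_pos_of_pos_on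
    ((hf.mono ((uIcc_of_le hlu).trans_subset hsub' |>.trans inter_subset_left)).intervalIntegrable)
    (fun x hx => (hsub' (Ioo_subset_Icc_self hx)).2) (by linarith : (l + r) / 2 < (r + u) / 2)
  rw [intervalIntegral.integral_of_le hlu] at hpos
  exact (h _ _ (hsub' (left_mem_Icc.2 (by linarith))).1 (by linarith)).not_gt hpos

def piconeBoundary (u u' w : ℝ → ℝ) (r : ℝ) : ℝ :=
  2 * u' r / u r * (w r ^ 2 - u r ^ 2)

def piconeDefect (u u' w w' : ℝ → ℝ) (r : ℝ) : ℝ :=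
  2 * (w' r - u' r / u r * w r) ^ 2 + (w r ^ 2 - u r ^ 2) ^ 2 / r ^ 2

theorem continuousOn_sq_sub_sq_div_sq {v w : ℝ → ℝ} (hv : ContinuousOn v (Ioi 0))
    (hw : ContinuousOn w (Ioi 0)) :
    ContinuousOn (fun r => (v r ^ 2 - w r ^ 2) ^ 2 / r ^ 2) (Ioi 0) :=
  ((hv.pow 2).sub (hw.pow 2)).pow 2 |>.div (continuousOn_pow 2)
    fun _ hr => pow_ne_zero 2 (ne_of_gt hr)

theorem uIntegrand_nonneg {α β : ℝ} (hαβ : 0 ≤ α * β) (u u' : ℝ → ℝ) (r : ℝ) :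
    0 ≤ uIntegrand α β u u' r := by
  unfold uIntegrand
  have := mul_nonneg hαβ (sq_nonneg (u r))
  positivity

theorem abs_piconeBoundary_le {α β : ℝ} (hαβ : 0 ≤ α * β) {u u' w w' : ℝ → ℝ} {r : ℝ}
    (hr : 0 < r) (hu : 1 / 2 ≤ u r) :
    |piconeBoundary u u' w r| ≤ 4 * (r * (uIntegrand α β u u' r + uIntegrand α β w w' r)) := by
  have hQ : |2 * u' r / u r| ≤ 4 * |u' r| := by
    rw [abs_div, abs_of_pos (show 0 < u r by linarith), div_le_iff₀ (by linarith), abs_mul, abs_two]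
    nlinarith [abs_nonneg (u' r)]
  have hdiff : |w r ^ 2 - u r ^ 2| ≤ |1 - w r ^ 2| + |1 - u r ^ 2| :=
    calc |w r ^ 2 - u r ^ 2| = |(1 - u r ^ 2) - (1 - w r ^ 2)| := by ring_nf
      _ ≤ |1 - w r ^ 2| + |1 - u r ^ 2| := (abs_sub _ _).trans_eq (add_comm _ _)
  have hamgm : ∀ q : ℝ, 2 * (|u' r| * |q|) ≤ r * (u' r ^ 2 + q ^ 2 / r ^ 2) := by
    intro q
    rw [← sq_abs (u' r), ← sq_abs q,
      show r * (|u' r| ^ 2 + |q| ^ 2 / r ^ 2) = ((r * |u' r|) ^ 2 + |q| ^ 2) / r by field_simp,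
      le_div_iff₀ hr]
    nlinarith [two_mul_le_add_sq (r * |u' r|) |q|]
  have h₁ := hamgm (1 - w r ^ 2)
  have h₂ := hamgm (1 - u r ^ 2)
  have hrest : 0 ≤ r * (4 * u' r ^ 2 + 2 * ((1 - w r ^ 2) ^ 2 / r ^ 2) +
      2 * ((1 - u r ^ 2) ^ 2 / r ^ 2) + 4 * (α * β * u r ^ 2) + 4 * (α * β * w r ^ 2) +
      8 * w' r ^ 2) := by
    have := mul_nonneg hαβ (sq_nonneg (u r))
    have := mul_nonneg hαβ (sq_nonneg (w r))
    positivity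
  rw [piconeBoundary, abs_mul]
  calc |2 * u' r / u r| * |w r ^ 2 - u r ^ 2|
      ≤ 4 * |u' r| * (|1 - w r ^ 2| + |1 - u r ^ 2|) :=
        mul_le_mul hQ hdiff (abs_nonneg _) (by positivity)
    _ ≤ 4 * (r * (uIntegrand α β u u' r + uIntegrand α β w w' r)) := by
        unfold uIntegrand
        linarith

def IsReducedSolution (α β : ℝ) (u u' : ℝ → ℝ) : Prop :=
  ∀ r : ℝ, 0 < r →
    HasDerivAt u (u' r) r ∧ HasDerivAt u' (α * β / 2 * u r + u r * (u r ^ 2 - 1) / r ^ 2) r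

namespace IsReducedSolution

open Real

variable {α β : ℝ} {u u' w w' : ℝ → ℝ}

theorem continuousOn (hu : IsReducedSolution α β u u') : ContinuousOn u (Ioi 0) :=
  fun r hr => (hu r hr).1.continuousAt.continuousWithinAt

theorem continuousOn_deriv (hu : IsReducedSolution α β u u') : ContinuousOn u' (Ioi 0) :=
  fun r hr => (hu r hr).2.continuousAt.continuousWithinAt

theorem locAC (hu : IsReducedSolution α β u u') : LocAC u u' :=
  LocAC.of_hasDerivAt (fun r hr => (hu r hr).1) hu.continuousOn_deriv

theorem uAdm_of_integrableOn (hu : IsReducedSolution α β u u') (h0 : Tendsto u (𝓝[>] 0) (𝓝 1))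
    (hinf : Tendsto u atTop (𝓝 0)) (hfin : IntegrableOn (uIntegrand α β u u') (Ioi 0)) :
    uAdm α β u u' :=
  ⟨hu.locAC, hfin, h0, hinf⟩

theorem le_one (hαβ : 0 ≤ α * β) (hu : IsReducedSolution α β u u')
    (h0 : Tendsto u (𝓝[>] 0) (𝓝 1)) (hinf : Tendsto u atTop (𝓝 0)) :
    ∀ r, 0 < r → u r ≤ 1 := by
  intro r₁ hr₁
  by_contra! h₁
  obtain ⟨r₀, hr₀, hr₁₀, hmax⟩ := hu.continuousOn.exists_isLocalMax_of_eventually_lt hr₁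
    (h0.eventually (gt_mem_nhds h₁)) (hinf.eventually (gt_mem_nhds (by linarith)))
  have hur₀ : 1 < u r₀ := h₁.trans_le hr₁₀
  refine not_isLocalMax_of_hasDerivAt_deriv_pos ?_ (hu r₀ hr₀).2 ?_ hmax
  · filter_upwards [Ioi_mem_nhds hr₀] with r hr using (hu r hr).1
  · have h1 : 0 ≤ α * β / 2 * u r₀ := mul_nonneg (by linarith) (by linarith)
    have h2 : 0 < u r₀ * (u r₀ ^ 2 - 1) / r₀ ^ 2 :=
      div_pos (mul_pos (by linarith) (by nlinarith)) (by positivity)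
    linarith

theorem hasDerivAt_sub_mul_exp (hu : IsReducedSolution α β u u') {k : ℝ}
    (hk : k ^ 2 = α * β / 2) {r : ℝ} (hr : 0 < r) :
    HasDerivAt (fun r => (u' r - k * u r) * exp (k * r))
      (u r * (u r ^ 2 - 1) / r ^ 2 * exp (k * r)) r := by
  have := ((hu r hr).2.sub ((hu r hr).1.const_mul k)).mul ((hasDerivAt_id r).const_mul k).exp
  exact this.congr_deriv
    (by simp only [id, Pi.sub_apply]; linear_combination -(u r * exp (k * r)) * hk)

theorem antitoneOn_sub_mul_exp (hu : IsReducedSolution α β u u')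
    (hu₀ : ∀ r, 0 < r → 0 ≤ u r) (hu₁ : ∀ r, 0 < r → u r ≤ 1) {k : ℝ}
    (hk : k ^ 2 = α * β / 2) :
    AntitoneOn (fun r => (u' r - k * u r) * exp (k * r)) (Ioi 0) := by
  refine antitoneOn_of_hasDerivWithinAt_nonpos (convex_Ioi 0)
    (f' := fun r => u r * (u r ^ 2 - 1) / r ^ 2 * exp (k * r))
    (fun r hr => (hu.hasDerivAt_sub_mul_exp hk hr).continuousAt.continuousWithinAt)
    (fun r hr => ?_) (fun r hr => ?_)
  · rw [interior_Ioi] at hr ⊢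
    exact (hu.hasDerivAt_sub_mul_exp hk hr).hasDerivWithinAt
  · rw [interior_Ioi] at hr
    have : u r * (u r ^ 2 - 1) ≤ 0 :=
      mul_nonpos_of_nonneg_of_nonpos (hu₀ r hr) (by nlinarith [hu₀ r hr, hu₁ r hr])
    exact mul_nonpos_of_nonpos_of_nonneg (div_nonpos_of_nonpos_of_nonneg this (sq_nonneg r))
      (exp_pos _).le

theorem neg_sqrt_mul_le_deriv (hαβ : 0 ≤ α * β) (hu : IsReducedSolution α β u u')
    (hu₀ : ∀ r, 0 < r → 0 ≤ u r) (hu₁ : ∀ r, 0 < r → u r ≤ 1) :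
    ∀ r, 0 < r → -(√(α * β / 2) * u r) ≤ u' r := by
  set m := √(α * β / 2)
  have hm : 0 ≤ m := sqrt_nonneg _
  have hW := hu.antitoneOn_sub_mul_exp hu₀ hu₁ (k := -m)
    (by rw [neg_sq, sq_sqrt (by linarith)])
  intro r₀ hr₀
  by_contra! h
  set κ := -((u' r₀ - -m * u r₀) * exp (-m * r₀))
  have hκ : 0 < κ := neg_pos.2 (mul_neg_of_neg_of_pos (by linarith) (exp_pos _))
  -- `(u' + m u) e^{-m r}` is antitone and equals `-κ < 0` at `r₀`, so `u' ≤ -κ` after `r₀`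
  have hslope : ∀ r ∈ Ici r₀, u' r + κ ≤ 0 := by
    intro r (hr : r₀ ≤ r)
    have hWr := hW hr₀ (hr₀.trans_le hr) hr
    have he : exp (-m * r) * exp (m * r) = 1 := by rw [← exp_add]; simp
    have hge : 1 ≤ exp (m * r) := one_le_exp (mul_nonneg hm (hr₀.le.trans hr))
    have hmu : 0 ≤ m * u r := mul_nonneg hm (hu₀ r (hr₀.trans_le hr))
    nlinarith [exp_pos (m * r)]
  have hanti : AntitoneOn (fun r => u r + κ * r) (Ici r₀) := by
    refine antitoneOn_of_hasDerivWithinAt_nonpos (convex_Ici r₀) (f' := fun r => u' r + κ)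
      (fun r hr => ?_) (fun r hr => ?_) (fun r hr => hslope r (interior_subset hr))
    · exact ((hu r (hr₀.trans_le hr)).1.continuousAt.add
        (continuousAt_id.const_mul κ)).continuousWithinAt
    · rw [interior_Ici] at hr
      have := (hu r (hr₀.trans hr)).1.add ((hasDerivAt_id r).const_mul κ)
      exact (this.congr_deriv (by simp)).hasDerivWithinAt
  set y := r₀ + (u r₀ + 1) / κ
  have hy : r₀ ≤ y := le_add_of_nonneg_right (div_nonneg (by linarith [hu₀ r₀ hr₀]) hκ.le)
  have := hanti self_mem_Ici hy hy
  have hκy : κ * (y - r₀) = u r₀ + 1 := by simp only [y]; field_simp; ring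
  nlinarith [hu₀ y (hr₀.trans_le hy)]

theorem pos (hαβ : 0 ≤ α * β) (hu : IsReducedSolution α β u u')
    (hu₀ : ∀ r, 0 < r → 0 ≤ u r) (hu₁ : ∀ r, 0 < r → u r ≤ 1)
    (h0 : Tendsto u (𝓝[>] 0) (𝓝 1)) :
    ∀ r, 0 < r → 0 < u r := by
  set m := √(α * β / 2)
  have hd : ∀ r, 0 < r →
      HasDerivAt (fun r => u r * exp (m * r)) ((u' r + m * u r) * exp (m * r)) r :=
    fun r hr => ((hu r hr).1.mul ((hasDerivAt_id r).const_mul m).exp).congr_deriv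
      (by simp only [id]; ring)
  have hmono : MonotoneOn (fun r => u r * exp (m * r)) (Ioi 0) := by
    refine monotoneOn_of_hasDerivWithinAt_nonneg (convex_Ioi 0)
      (f' := fun r => (u' r + m * u r) * exp (m * r))
      (fun r hr => (hd r hr).continuousAt.continuousWithinAt) (fun r hr => ?_) (fun r hr => ?_)
    · rw [interior_Ioi] at hr ⊢
      exact (hd r hr).hasDerivWithinAt
    · rw [interior_Ioi] at hr
      exact mul_nonneg (by linarith [hu.neg_sqrt_mul_le_deriv hαβ hu₀ hu₁ r hr]) (exp_pos _).le
  intro r₀ hr₀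
  refine (hu₀ r₀ hr₀).lt_of_ne' fun h => ?_
  obtain ⟨r, hur, hr⟩ := ((h0.eventually (lt_mem_nhds one_pos)).and (Ioo_mem_nhdsGT hr₀)).exists
  have := hmono hr.1 hr₀ hr.2.le
  simp only [h, zero_mul] at this
  exact this.not_gt (mul_pos hur (exp_pos _))

theorem eventually_deriv_le_sqrt_mul (hαβ : 0 ≤ α * β) (hu : IsReducedSolution α β u u')
    (hu₀ : ∀ r, 0 < r → 0 ≤ u r) (hu₁ : ∀ r, 0 < r → u r ≤ 1)
    (h0 : Tendsto u (𝓝[>] 0) (𝓝 1)) (hinf : Tendsto u atTop (𝓝 0)) :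
    ∀ᶠ r in atTop, u' r ≤ √(α * β / 2) * u r := by
  set m := √(α * β / 2)
  have hm : 0 ≤ m := sqrt_nonneg _
  have hV := hu.antitoneOn_sub_mul_exp hu₀ hu₁ (k := m) (sq_sqrt (by linarith))
  -- if `(u' - m u) e^{m r}` stayed positive, `u` would increase and could not tend to `0`
  obtain ⟨r₁, hr₁, hV₁⟩ : ∃ r₁, 0 < r₁ ∧ (u' r₁ - m * u r₁) * exp (m * r₁) ≤ 0 := by
    by_contra! h
    have hmono : MonotoneOn u (Ioi 0) := by
      refine monotoneOn_of_hasDerivWithinAt_nonneg (convex_Ioi 0) (f' := u') hu.continuousOn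
        (fun r hr => ?_) (fun r hr => ?_) <;> rw [interior_Ioi] at hr
      · rw [interior_Ioi]
        exact (hu r hr).1.hasDerivWithinAt
      · have := pos_of_mul_pos_left (h r hr) (exp_pos _).le
        nlinarith [mul_nonneg hm (hu₀ r hr)]
    have h1 : u 1 ≤ 0 := ge_of_tendsto hinf <| by
      filter_upwards [eventually_ge_atTop 1] with r hr
      exact hmono (mem_Ioi.2 one_pos) (mem_Ioi.2 (one_pos.trans_le hr)) hr
    exact h1.not_gt (hu.pos hαβ hu₀ hu₁ h0 1 one_pos)
  filter_upwards [eventually_ge_atTop r₁] with r hr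
  have := (hV hr₁ (hr₁.trans_le hr) hr).trans hV₁
  nlinarith [exp_pos (m * r)]

theorem locAC_piconeBoundary (hu : IsReducedSolution α β u u') (hpos : ∀ r, 0 < r → 0 < u r)
    (hw : LocAC w w') :
    LocAC (piconeBoundary u u' w)
      (fun r => uIntegrand α β w w' r - uIntegrand α β u u' r - piconeDefect u u' w w' r) := by
  have hQ : LocAC (fun r => 2 * u' r / u r) (fun r => 2 *
      ((α * β / 2 * u r + u r * (u r ^ 2 - 1) / r ^ 2) * u r - u' r * u' r) / u r ^ 2) := by
    refine LocAC.of_hasDerivAt (fun r hr => ?_) ?_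
    · exact (((hu r hr).2.const_mul 2).div (hu r hr).1 (hpos r hr).ne').congr_deriv (by ring)
    · have := hu.continuousOn
      have := hu.continuousOn_deriv
      fun_prop (disch := first
        | (intro r hr; exact pow_ne_zero 2 (ne_of_gt hr))
        | (intro r hr; exact pow_ne_zero 2 (hpos r hr).ne'))
  refine (hQ.mul ((hw.mul hw).sub (hu.locAC.mul hu.locAC))).congr (fun r _ => ?_) (fun r hr => ?_)
  · simp only [piconeBoundary]
    ring
  · have := (hpos r hr).ne'
    have : r ≠ 0 := ne_of_gt hr
    simp only [uIntegrand, piconeDefect]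
    field_simp
    ring

theorem integral_Ioc_le_sub_piconeBoundary (hu : IsReducedSolution α β u u')
    (hpos : ∀ r, 0 < r → 0 < u r) (hw : LocAC w w') {a b c d : ℝ} (ha : 0 < a) (hac : a ≤ c)
    (hcd : c ≤ d) (hdb : d ≤ b) (hfu : IntegrableOn (uIntegrand α β u u') (Ioc a b))
    (hfw : IntegrableOn (uIntegrand α β w w') (Ioc a b)) :
    ∫ r in Ioc c d, (w r ^ 2 - u r ^ 2) ^ 2 / r ^ 2 ≤
      (∫ r in Ioc a b, uIntegrand α β w w' r) - (∫ r in Ioc a b, uIntegrand α β u u' r) -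
        (piconeBoundary u u' w b - piconeBoundary u u' w a) := by
  have hab : a ≤ b := hac.trans (hcd.trans hdb)
  have hsub : Ioc a b ⊆ Ioi 0 := fun r hr => ha.trans hr.1
  obtain ⟨hBi, hB⟩ := hu.locAC_piconeBoundary hpos hw a b ha hab
  rw [intervalIntegrable_iff_integrableOn_Ioc_of_le hab] at hBi
  rw [intervalIntegral.integral_of_le hab] at hB
  have hD : IntegrableOn (piconeDefect u u' w w') (Ioc a b) :=
    ((hfw.sub hfu).sub hBi).congr_fun (fun r _ => by simp) measurableSet_Ioc
  have hT : IntegrableOn (fun r => (w r ^ 2 - u r ^ 2) ^ 2 / r ^ 2) (Ioc a b) := by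
    refine hD.mono' (((continuousOn_sq_sub_sq_div_sq hw.continuousOn hu.continuousOn).mono
      hsub).aestronglyMeasurable measurableSet_Ioc) (ae_of_all _ fun r => ?_)
    rw [Real.norm_of_nonneg (by positivity)]
    exact le_add_of_nonneg_left (by positivity)
  have hBD : ∫ r in Ioc a b, (uIntegrand α β w w' r - uIntegrand α β u u' r -
      piconeDefect u u' w w' r) = (∫ r in Ioc a b, uIntegrand α β w w' r) -
        (∫ r in Ioc a b, uIntegrand α β u u' r) - ∫ r in Ioc a b, piconeDefect u u' w w' r := by
    rw [integral_sub (f := fun r => uIntegrand α β w w' r - uIntegrand α β u u' r)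
      (hfw.sub hfu) hD, integral_sub hfw hfu]
  calc ∫ r in Ioc c d, (w r ^ 2 - u r ^ 2) ^ 2 / r ^ 2
      ≤ ∫ r in Ioc a b, (w r ^ 2 - u r ^ 2) ^ 2 / r ^ 2 :=
        setIntegral_mono_set hT (ae_of_all _ fun r => by positivity)
          (Ioc_subset_Ioc hac hdb).eventuallyLE
    _ ≤ ∫ r in Ioc a b, piconeDefect u u' w w' r :=
        setIntegral_mono_on hT hD measurableSet_Ioc fun r _ => le_add_of_nonneg_left (by positivity)
    _ = _ := by linarith

theorem tendsto_piconeBoundary_atTop (hαβ : 0 ≤ α * β) (hu : IsReducedSolution α β u u')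
    (hu₀ : ∀ r, 0 < r → 0 ≤ u r) (h0 : Tendsto u (𝓝[>] 0) (𝓝 1))
    (hinf : Tendsto u atTop (𝓝 0)) (hw : Tendsto w atTop (𝓝 0)) :
    Tendsto (piconeBoundary u u' w) atTop (𝓝 0) := by
  set m := √(α * β / 2)
  have hu₁ := hu.le_one hαβ h0 hinf
  refine squeeze_zero_norm' ?_ (by simpa using ((hw.pow 2).add (hinf.pow 2)).const_mul (2 * m))
  filter_upwards [hu.eventually_deriv_le_sqrt_mul hαβ hu₀ hu₁ h0 hinf, eventually_gt_atTop 0]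
    with r hup hr
  have hur := hu.pos hαβ hu₀ hu₁ h0 r hr
  have hQ : |2 * u' r / u r| ≤ 2 * m := by
    rw [abs_div, abs_of_pos hur, div_le_iff₀ hur, abs_mul, abs_two]
    have := abs_le.2 ⟨hu.neg_sqrt_mul_le_deriv hαβ hu₀ hu₁ r hr, hup⟩
    linarith
  rw [Real.norm_eq_abs, piconeBoundary, abs_mul]
  exact mul_le_mul hQ (abs_le.2 ⟨by nlinarith, by nlinarith⟩) (abs_nonneg _)
    (mul_nonneg zero_le_two (sqrt_nonneg _))

theorem integral_Ioc_le_uEnergy_sub (hαβ : 0 ≤ α * β) (hu : IsReducedSolution α β u u')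
    (hu₀ : ∀ r, 0 < r → 0 ≤ u r) (h0 : Tendsto u (𝓝[>] 0) (𝓝 1))
    (hinf : Tendsto u atTop (𝓝 0)) (hfu : IntegrableOn (uIntegrand α β u u') (Ioi 0))
    (hw : uAdm α β w w') {c d : ℝ} (hc : 0 < c) (hcd : c ≤ d) :
    ∫ r in Ioc c d, (w r ^ 2 - u r ^ 2) ^ 2 / r ^ 2 ≤ uEnergy α β w w' - uEnergy α β u u' := by
  obtain ⟨hwAC, hfw, -, hwinf⟩ := hw
  have hpos := hu.pos hαβ hu₀ (hu.le_one hαβ h0 hinf) h0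
  obtain ⟨a, ha, haf⟩ := exists_seq_tendsto_mul_abs_tendsto_zero one_pos
    ((hfu.add hfw).mono_set Ioo_subset_Ioi_self)
  have hb : Tendsto (fun n : ℕ => (n : ℝ)) atTop atTop := tendsto_natCast_atTop_atTop
  have hBa : Tendsto (fun n => piconeBoundary u u' w (a n)) atTop (𝓝 0) := by
    refine squeeze_zero_norm' ?_ (by simpa using haf.const_mul 4)
    filter_upwards [ha.eventually (h0.eventually (lt_mem_nhds one_half_lt_one)),
      ha.eventually self_mem_nhdsWithin] with n hun (han : 0 < a n)
    rw [Real.norm_eq_abs,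
      abs_of_nonneg (add_nonneg (uIntegrand_nonneg hαβ u u' _) (uIntegrand_nonneg hαβ w w' _))]
    exact abs_piconeBoundary_le hαβ han hun.le
  have hBb := (hu.tendsto_piconeBoundary_atTop hαβ hu₀ h0 hinf hwinf).comp hb
  have hlim : Tendsto (fun n : ℕ => uEnergy α β w w' -
      (∫ r in Ioc (a n) n, uIntegrand α β u u' r) -
      (piconeBoundary u u' w n - piconeBoundary u u' w (a n))) atTop
      (𝓝 (uEnergy α β w w' - uEnergy α β u u')) := by
    simpa [uEnergy] using
      (tendsto_const_nhds.sub (tendsto_setIntegral_Ioc_of_integrableOn hfu ha hb)).sub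
      (hBb.sub hBa)
  refine ge_of_tendsto hlim ?_
  filter_upwards [ha.eventually (Ioo_mem_nhdsGT hc), hb.eventually_ge_atTop d] with n han hn
  have hsub : Ioc (a n) n ⊆ Ioi 0 := fun r hr => han.1.trans hr.1
  have hfw_le : ∫ r in Ioc (a n) n, uIntegrand α β w w' r ≤ uEnergy α β w w' :=
    setIntegral_mono_set hfw (ae_of_all _ (uIntegrand_nonneg hαβ w w')) hsub.eventuallyLE
  have := hu.integral_Ioc_le_sub_piconeBoundary hpos hwAC han.1 han.2.le hcd hn
    (hfu.mono_set hsub) (hfw.mono_set hsub)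
  linarith

theorem uEnergy_le (hαβ : 0 ≤ α * β) (hu : IsReducedSolution α β u u')
    (hu₀ : ∀ r, 0 < r → 0 ≤ u r) (h0 : Tendsto u (𝓝[>] 0) (𝓝 1))
    (hinf : Tendsto u atTop (𝓝 0)) (hfu : IntegrableOn (uIntegrand α β u u') (Ioi 0))
    (hw : uAdm α β w w') : uEnergy α β u u' ≤ uEnergy α β w w' := by
  have := hu.integral_Ioc_le_uEnergy_sub hαβ hu₀ h0 hinf hfu hw one_pos le_rfl
  rw [Ioc_self, setIntegral_empty] at this
  linarith

theorem eq_of_uEnergy_le (hαβ : 0 ≤ α * β) (hu : IsReducedSolution α β u u')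
    (hu₀ : ∀ r, 0 < r → 0 ≤ u r) (h0 : Tendsto u (𝓝[>] 0) (𝓝 1))
    (hinf : Tendsto u atTop (𝓝 0)) (hfu : IntegrableOn (uIntegrand α β u u') (Ioi 0))
    (hw : uAdm α β w w') (hle : uEnergy α β w w' ≤ uEnergy α β u u') :
    ∀ r, 0 < r → w r = u r := by
  have hpos := hu.pos hαβ hu₀ (hu.le_one hαβ h0 hinf) h0
  have hwc := hw.1.continuousOn
  have hT := eq_zero_of_forall_integral_Ioc_nonpos
    (continuousOn_sq_sub_sq_div_sq hwc hu.continuousOn) (fun r _ => by positivity) fun c d hc hcd =>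
      (hu.integral_Ioc_le_uEnergy_sub hαβ hu₀ h0 hinf hfu hw hc hcd).trans (sub_nonpos.2 hle)
  have hsq : EqOn (w ^ 2) (u ^ 2) (Ioi 0) := fun r hr => by
    have := hT r hr
    rwa [div_eq_zero_iff, or_iff_left (pow_ne_zero 2 (ne_of_gt hr)), pow_eq_zero_iff two_ne_zero,
      sub_eq_zero] at this
  rcases isPreconnected_Ioi.eq_or_eq_neg_of_sq_eq hwc hu.continuousOn hsq
    (fun hr => (hpos _ hr).ne') with h | h
  · exact fun r hr => h hr
  · obtain ⟨r, hwr, hr⟩ :=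
      ((hw.2.2.1.eventually (lt_mem_nhds one_pos)).and self_mem_nhdsWithin).exists
    have := h hr
    simp only [Pi.neg_apply] at this
    linarith [hpos r hr]

end IsReducedSolution

/-- uniqueness for the `γ = ∞` problem: two nonnegative
finite-energy solutions coincide on `(0,∞)`; in particular the energy has a
unique minimizer subject to the boundary conditions. -/
theorem gamma_infty_uniqueness (α β : ℝ) (hα : 0 < α) (hβ : 0 < β)
    (u₁ u₁' u₂ u₂' : ℝ → ℝ)
    (hode₁ : ∀ r : ℝ, 0 < r →
      HasDerivAt u₁ (u₁' r) r ∧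
      HasDerivAt u₁' (α * β / 2 * u₁ r + u₁ r * (u₁ r ^ 2 - 1) / r ^ 2) r)
    (hode₂ : ∀ r : ℝ, 0 < r →
      HasDerivAt u₂ (u₂' r) r ∧
      HasDerivAt u₂' (α * β / 2 * u₂ r + u₂ r * (u₂ r ^ 2 - 1) / r ^ 2) r)
    (hnonneg₁ : ∀ r : ℝ, 0 < r → 0 ≤ u₁ r)
    (hnonneg₂ : ∀ r : ℝ, 0 < r → 0 ≤ u₂ r)
    (h₁0 : Tendsto u₁ (𝓝[>] (0 : ℝ)) (𝓝 1))
    (h₁inf : Tendsto u₁ atTop (𝓝 0))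
    (h₂0 : Tendsto u₂ (𝓝[>] (0 : ℝ)) (𝓝 1))
    (h₂inf : Tendsto u₂ atTop (𝓝 0))
    (hfin₁ : IntegrableOn (uIntegrand α β u₁ u₁') (Ioi 0))
    (hfin₂ : IntegrableOn (uIntegrand α β u₂ u₂') (Ioi 0)) :
    (∀ r : ℝ, 0 < r → u₁ r = u₂ r) ∧
      (∀ v₁ v₁' v₂ v₂' : ℝ → ℝ, uAdm α β v₁ v₁' → uAdm α β v₂ v₂' →
        (∀ w w' : ℝ → ℝ, uAdm α β w w' → uEnergy α β v₁ v₁' ≤ uEnergy α β w w') →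
        (∀ w w' : ℝ → ℝ, uAdm α β w w' → uEnergy α β v₂ v₂' ≤ uEnergy α β w w') →
        ∀ r : ℝ, 0 < r → v₁ r = v₂ r) := by
  have hαβ : 0 ≤ α * β := (mul_pos hα hβ).le
  have hu₁ : IsReducedSolution α β u₁ u₁' := hode₁
  have hu₂ : IsReducedSolution α β u₂ u₂' := hode₂
  have hadm₁ := hu₁.uAdm_of_integrableOn h₁0 h₁inf hfin₁
  have hunique : ∀ {w w' : ℝ → ℝ}, uAdm α β w w' → uEnergy α β w w' ≤ uEnergy α β u₁ u₁' →
      ∀ r, 0 < r → w r = u₁ r :=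
    hu₁.eq_of_uEnergy_le hαβ hnonneg₁ h₁0 h₁inf hfin₁
  refine ⟨fun r hr => (hunique (hu₂.uAdm_of_integrableOn h₂0 h₂inf hfin₂)
    (hu₂.uEnergy_le hαβ hnonneg₂ h₂0 h₂inf hfin₂ hadm₁) r hr).symm, ?_⟩
  intro v₁ v₁' v₂ v₂' hv₁ hv₂ hmin₁ hmin₂ r hr
  rw [hunique hv₁ (hmin₁ _ _ hadm₁) r hr, hunique hv₂ (hmin₂ _ _ hadm₁) r hr]
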